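/- arXiv:2107.05892 — 3 statements merged into one kernel-verified Lean document; each statement's English description precedes it below -/
import Mathlib

section
/- Two distinct points of V × S¹ have the same image under the map Ψ(x, t) = t·x only along V₀: if x, x' ∈ V and t, t' ∈ S¹ satisfy t·x = t'·x' and (x, t) ≠ (x', t'), then x ∈ V₀ and x' ∈ V₀, i.e. Σᵢ xᵢ = 0 and Σᵢ x'ᵢ = 0. -/
/-! With `S = Σᵢ xᵢ` and `S' = Σᵢ x'ᵢ`, the equation `t·x = t'·x'` gives `t S = t' S'`, so
`‖S‖ = ‖S'‖`. Both sums lie on the closed negative imaginary half-axis, hence on a common ray,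
so `S = S'`. If this sum were nonzero, cancelling it would give `t = t'` and then `x = x'`. -/

theorem Complex.sameRay_of_re_eq_zero_of_im_nonpos {z w : ℂ} (hz : z.re = 0) (hz' : z.im ≤ 0)
    (hw : w.re = 0) (hw' : w.im ≤ 0) : SameRay ℝ z w := by
  have hz_eq : z = (-z.im) • (-I) := Complex.ext (by simp [hz]) (by simp)
  have hw_eq : w = (-w.im) • (-I) := Complex.ext (by simp [hw]) (by simp)
  rw [hz_eq, hw_eq]
  exact ((SameRay.refl _).nonneg_smul_left (neg_nonneg.2 hz')).nonneg_smul_right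
    (neg_nonneg.2 hw')

/-- Failure of injectivity of `Ψ : V × S¹ → T⁷`, `Ψ(x,t) = t·x`, happens only along
`V₀ = {z ∈ V : Σᵢ zᵢ = 0}`: if `(x,t) ≠ (x',t')` in `V × S¹` have the same image,
then `x ∈ V₀` and `x' ∈ V₀`. -/
theorem psi_injective_off_V0 :
    ∀ (x x' : Fin 7 → ℂ) (t t' : ℂ),
      (∀ i, ‖x i‖ = 1) → (∑ i, (x i).re) = 0 → (∑ i, (x i).im) ≤ 0 →
      (∀ i, ‖x' i‖ = 1) → (∑ i, (x' i).re) = 0 → (∑ i, (x' i).im) ≤ 0 →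
      ‖t‖ = 1 → ‖t'‖ = 1 →
      (∀ i, t * x i = t' * x' i) → (x, t) ≠ (x', t') →
      (∑ i, x i) = 0 ∧ (∑ i, x' i) = 0 := by
  intro x x' t t' _ hx_re hx_im _ hx'_re hx'_im ht ht' heq hne
  have ht₀ : t ≠ 0 := norm_ne_zero_iff.1 (ht ▸ one_ne_zero)
  have hsum : t * ∑ i, x i = t' * ∑ i, x' i := by simp only [Finset.mul_sum, heq]
  have hnorm : ‖∑ i, x i‖ = ‖∑ i, x' i‖ := by
    simpa only [norm_mul, ht, ht', one_mul] using congrArg norm hsum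
  have hray : SameRay ℝ (∑ i, x i) (∑ i, x' i) :=
    Complex.sameRay_of_re_eq_zero_of_im_nonpos (by rwa [Complex.re_sum])
      (by rwa [Complex.im_sum]) (by rwa [Complex.re_sum]) (by rwa [Complex.im_sum])
  have hS : ∑ i, x i = ∑ i, x' i := hray.eq_of_norm_eq hnorm
  suffices h : ∑ i, x i = 0 from ⟨h, hS ▸ h⟩
  by_contra h
  have htt : t = t' := mul_right_cancel₀ h (hS ▸ hsum)
  subst htt
  exact hne (Prod.ext (funext fun i => mul_left_cancel₀ ht₀ (heq i)) rfl)
end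

section
/- Let ∼ be the equivalence relation on V × S¹ generated by (x, t) ∼ (t·x, 1) for all x ∈ V₀ and t ∈ S¹. Then the map Ψ(x, t) = t·x descends to a well-defined map Ψ̂ : (V × S¹)/∼ → T⁷, and Ψ̂ is a homeomorphism (where V × S¹ carries the subspace-product topology and the quotient carries the quotient topology). -/
open scoped BigOperators

/-- The 7-torus `T⁷ = (S¹)⁷ ⊂ ℂ⁷`. -/
def Torus7 : Set (Fin 7 → ℂ) := {z | ∀ i, ‖z i‖ = 1}

/-- `V = {z ∈ T⁷ : Σᵢ Re zᵢ = 0 and Σᵢ Im zᵢ ≤ 0}`. -/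
def VSet : Set (Fin 7 → ℂ) :=
  {z | (∀ i, ‖z i‖ = 1) ∧ (∑ i, (z i).re) = 0 ∧ (∑ i, (z i).im) ≤ 0}

/-- The unit circle `S¹ ⊂ ℂ`. -/
def S1 : Set ℂ := {t | ‖t‖ = 1}

/-- The relation on `V × S¹` generating the equivalence relation `∼`:
`(x, t) ∼ (t·x, 1)` whenever `x ∈ V₀`, i.e. `Σᵢ xᵢ = 0`. -/
def glueRel (p q : ↥VSet × ↥S1) : Prop :=
  (∑ i, (p.1 : Fin 7 → ℂ) i) = 0 ∧
  (∀ i, (q.1 : Fin 7 → ℂ) i = (p.2 : ℂ) * (p.1 : Fin 7 → ℂ) i) ∧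
  (q.2 : ℂ) = 1

/-!
Write `s(z) = Σᵢ zᵢ`. A point `z ∈ T⁷` lies in `V` exactly when `s(z)` lies on the ray `-i·ℝ≥0`,
and `s(t·z) = t·s(z)`. Hence every `w ∈ T⁷` is `t·x` with `x ∈ V` (rotate `s(w)` onto that ray),
and the pair `(x, t)` is unique unless `s(x) = 0`, i.e. `x ∈ V₀`, which is precisely where `∼`
identifies `(x, t)` with `(t·x, 1)`. So `Ψ` is a continuous surjection from a compact space to a
Hausdorff one whose fibres are the classes of `∼`.
-/

theorem exists_homeomorph_quot_of_surjective {X Y : Type*} [TopologicalSpace X] [CompactSpace X]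
    [TopologicalSpace Y] [T2Space Y] {r : X → X → Prop} {f : X → Y} (hf : Continuous f)
    (hsurj : Function.Surjective f) (hfib : ∀ x y, f x = f y ↔ Quot.mk r x = Quot.mk r y) :
    ∃ e : Quot r ≃ₜ Y, ∀ x, e (Quot.mk r x) = f x := by
  let g : Quot r → Y := Quot.lift f fun x y hxy => (hfib x y).2 (Quot.sound hxy)
  have hg : Function.Bijective g := by
    refine ⟨fun a b => ?_, fun y => ?_⟩
    · induction a using Quot.ind
      induction b using Quot.ind
      exact (hfib _ _).1
    · obtain ⟨x, hx⟩ := hsurj y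
      exact ⟨Quot.mk r x, hx⟩
  exact ⟨(continuous_quot_lift _ hf).homeoOfEquivCompactToT2 (f := Equiv.ofBijective g hg),
    fun _ => rfl⟩

namespace Complex

theorem eq_neg_norm_mul_I_iff {s : ℂ} : s = -(‖s‖ : ℂ) * I ↔ s.re = 0 ∧ s.im ≤ 0 := by
  constructor
  · intro hs
    rw [hs]
    simp
  · rintro ⟨hre, him⟩
    have hs : s = (s.im : ℂ) * I := ext (by simp [hre]) (by simp)
    rw [hs, norm_mul, norm_I, mul_one, norm_real, Real.norm_of_nonpos him]
    push_cast
    ring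

theorem exists_norm_eq_one_mul_neg_norm_mul_I (s : ℂ) :
    ∃ u : ℂ, ‖u‖ = 1 ∧ s = u * (-(‖s‖ : ℂ) * I) := by
  refine ⟨I * exp (arg s * I), by rw [norm_mul, norm_I, norm_exp_ofReal_mul_I, one_mul], ?_⟩
  calc s = ‖s‖ * exp (arg s * I) := (norm_mul_exp_arg_mul_I s).symm
    _ = _ := by linear_combination (‖s‖ * exp (arg s * I)) * I_sq

end Complex

theorem mem_VSet_iff {z : Fin 7 → ℂ} :
    z ∈ VSet ↔ z ∈ Torus7 ∧ ∑ i, z i = -(‖∑ i, z i‖ : ℂ) * Complex.I := by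
  rw [Complex.eq_neg_norm_mul_I_iff, Complex.re_sum, Complex.im_sum]
  rfl

theorem smul_mem_Torus7 {t : ℂ} (ht : ‖t‖ = 1) {z : Fin 7 → ℂ} (hz : z ∈ Torus7) :
    t • z ∈ Torus7 := fun i => by
  rw [Pi.smul_apply, smul_eq_mul, norm_mul, ht, hz i, one_mul]

theorem sum_smul_apply {ι R : Type*} [Fintype ι] [NonUnitalNonAssocSemiring R] (t : R)
    (z : ι → R) : ∑ i, (t • z) i = t * ∑ i, z i := by
  simp only [Pi.smul_apply, smul_eq_mul, Finset.mul_sum]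

theorem isCompact_Torus7 : IsCompact Torus7 := by
  have h : Torus7 = Set.univ.pi fun _ => Metric.sphere (0 : ℂ) 1 := by
    ext z
    simp [Torus7]
  rw [h]
  exact isCompact_univ_pi fun _ => isCompact_sphere 0 1

theorem isCompact_VSet : IsCompact VSet :=
  isCompact_Torus7.inter_right <|
    (isClosed_eq (continuous_finsetSum _ fun i _ =>
      Complex.continuous_re.comp (continuous_apply i)) continuous_const).inter
    (isClosed_le (continuous_finsetSum _ fun i _ =>
      Complex.continuous_im.comp (continuous_apply i)) continuous_const)

theorem isCompact_S1 : IsCompact S1 := by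
  have h : S1 = Metric.sphere (0 : ℂ) 1 := by
    ext t
    simp [S1]
  rw [h]
  exact isCompact_sphere 0 1

instance : CompactSpace VSet := isCompact_iff_compactSpace.mp isCompact_VSet

instance : CompactSpace S1 := isCompact_iff_compactSpace.mp isCompact_S1

theorem ne_zero_of_mem_S1 (t : S1) : (t : ℂ) ≠ 0 :=
  norm_ne_zero_iff.mp (t.2.trans_ne one_ne_zero)

noncomputable def psi (p : VSet × S1) : Torus7 :=
  ⟨(p.2 : ℂ) • (p.1 : Fin 7 → ℂ), smul_mem_Torus7 p.2.2 p.1.2.1⟩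

theorem continuous_psi : Continuous psi :=
  ((continuous_subtype_val.comp continuous_snd).smul
    (continuous_subtype_val.comp continuous_fst)).subtype_mk _

theorem psi_surjective : Function.Surjective psi := by
  rintro ⟨w, hw⟩
  obtain ⟨u, hu, hs⟩ := Complex.exists_norm_eq_one_mul_neg_norm_mul_I (∑ i, w i)
  have hu0 : u ≠ 0 := norm_ne_zero_iff.mp (hu.trans_ne one_ne_zero)
  have hsum : ∑ i, (u⁻¹ • w) i = -(‖∑ i, w i‖ : ℂ) * Complex.I := by
    rw [sum_smul_apply]
    nth_rw 1 [hs]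
    rw [inv_mul_cancel_left₀ hu0]
  have hx : u⁻¹ • w ∈ VSet := by
    refine mem_VSet_iff.2 ⟨smul_mem_Torus7 (by rw [norm_inv, hu, inv_one]) hw, ?_⟩
    rw [hsum, norm_mul, norm_neg, Complex.norm_I, mul_one, Complex.norm_real, norm_norm]
  exact ⟨(⟨_, hx⟩, ⟨u, hu⟩), Subtype.ext (smul_inv_smul₀ hu0 w)⟩

theorem smul_mem_VSet_of_sum_eq_zero {x : Fin 7 → ℂ} (hx : x ∈ VSet) (hs : ∑ i, x i = 0)
    {t : ℂ} (ht : ‖t‖ = 1) : t • x ∈ VSet :=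
  mem_VSet_iff.2 ⟨smul_mem_Torus7 ht hx.1, by
    rw [sum_smul_apply, hs, mul_zero, norm_zero, Complex.ofReal_zero, neg_zero, zero_mul]⟩

theorem quot_mk_eq_of_sum_eq_zero (p : VSet × S1) (hp : ∑ i, (p.1 : Fin 7 → ℂ) i = 0) :
    Quot.mk glueRel p =
      Quot.mk glueRel (⟨_, smul_mem_VSet_of_sum_eq_zero p.1.2 hp p.2.2⟩, ⟨1, norm_one⟩) :=
  Quot.sound ⟨hp, fun _ => rfl, rfl⟩

theorem eq_of_psi_eq {p q : VSet × S1} (h : psi p = psi q)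
    (hp : ∑ i, (p.1 : Fin 7 → ℂ) i ≠ 0) : p = q := by
  have hvec : (p.2 : ℂ) • (p.1 : Fin 7 → ℂ) = (q.2 : ℂ) • (q.1 : Fin 7 → ℂ) :=
    congrArg Subtype.val h
  have hts : (p.2 : ℂ) * ∑ i, (p.1 : Fin 7 → ℂ) i = (q.2 : ℂ) * ∑ i, (q.1 : Fin 7 → ℂ) i := by
    rw [← sum_smul_apply, ← sum_smul_apply, hvec]
  have hnorm : ‖∑ i, (p.1 : Fin 7 → ℂ) i‖ = ‖∑ i, (q.1 : Fin 7 → ℂ) i‖ := by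
    have hp2 : ‖(p.2 : ℂ)‖ = 1 := p.2.2
    have hq2 : ‖(q.2 : ℂ)‖ = 1 := q.2.2
    simpa only [norm_mul, hp2, hq2, one_mul] using congrArg norm hts
  have hsum : ∑ i, (p.1 : Fin 7 → ℂ) i = ∑ i, (q.1 : Fin 7 → ℂ) i := by
    rw [(mem_VSet_iff.1 p.1.2).2, (mem_VSet_iff.1 q.1.2).2, hnorm]
  have ht : p.2 = q.2 := Subtype.ext (mul_right_cancel₀ hp (by rw [hts, hsum]))
  have hx : p.1 = q.1 :=
    Subtype.ext ((smul_right_injective _ (ne_zero_of_mem_S1 p.2)) (by rwa [ht] at hvec ⊢))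
  exact Prod.ext hx ht

theorem psi_eq_of_glueRel {p q : VSet × S1} (h : glueRel p q) : psi p = psi q := by
  obtain ⟨-, hx, ht⟩ := h
  exact Subtype.ext (funext fun i => by simp [psi, ht, hx i])

theorem psi_eq_iff (p q : VSet × S1) : psi p = psi q ↔ Quot.mk glueRel p = Quot.mk glueRel q := by
  refine ⟨fun h => ?_, fun h => ?_⟩
  · by_cases hp : ∑ i, (p.1 : Fin 7 → ℂ) i = 0
    · have hq : ∑ i, (q.1 : Fin 7 → ℂ) i = 0 := by
        have hts := congrArg (fun z : Torus7 => ∑ i, (z : Fin 7 → ℂ) i) h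
        simp only [psi, sum_smul_apply, hp, mul_zero] at hts
        exact (mul_eq_zero.1 hts.symm).resolve_left (ne_zero_of_mem_S1 q.2)
      rw [quot_mk_eq_of_sum_eq_zero p hp, quot_mk_eq_of_sum_eq_zero q hq]
      congr 3
      exact congrArg Subtype.val h
    · rw [eq_of_psi_eq h hp]
  · exact congrArg (Quot.lift psi fun _ _ => psi_eq_of_glueRel) h

/-- The map `Ψ(x,t) = t·x` descends to a well-defined map on the quotient of `V × S¹` by
the equivalence relation generated by `(x,t) ∼ (t·x, 1)` for `x ∈ V₀`, and the descended
map is a homeomorphism onto `T⁷` (with the quotient topology on the source and the subspace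
topology on the target). -/
theorem psi_descends_to_homeomorph :
    ∃ Ψhat : Quot glueRel ≃ₜ ↥Torus7,
      ∀ p : ↥VSet × ↥S1,
        ((Ψhat (Quot.mk glueRel p) : Fin 7 → ℂ)) =
          fun i => (p.2 : ℂ) * (p.1 : Fin 7 → ℂ) i := by
  obtain ⟨e, he⟩ := exists_homeomorph_quot_of_surjective continuous_psi psi_surjective psi_eq_iff
  exact ⟨e, fun p => congrArg Subtype.val (he p)⟩
end

section
/- There exists a fiber bundle with total space the real projective space ℝP⁷, base the 4-sphere S⁴, and fiber the real projective space ℝP³; that is, there is a continuous map p : ℝP⁷ → S⁴ which is locally trivial with fiber ℝP³. -/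
/-- Real projective `n`-space, the quotient of the unit sphere `Sⁿ ⊂ ℝⁿ⁺¹` by the
(equivalence relation generated by the) antipodal identification `x ∼ -x`, with the
quotient topology. -/
abbrev RealProjSpace (n : ℕ) :=
  Quot (fun x y : Metric.sphere (0 : EuclideanSpace ℝ (Fin (n + 1))) 1 =>
    (y : EuclideanSpace ℝ (Fin (n + 1))) = -(x : EuclideanSpace ℝ (Fin (n + 1))))

noncomputable section
open Metric Topology Quaternion

abbrev E (n : ℕ) := EuclideanSpace ℝ (Fin n)

abbrev Sph (n : ℕ) := Metric.sphere (0 : E (n + 1)) 1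

abbrev antipodalRel (n : ℕ) : Sph n → Sph n → Prop :=
  fun x y => (y : E (n + 1)) = -(x : E (n + 1))

example (n : ℕ) : RealProjSpace n = Quot (antipodalRel n) := rfl
/-- negation on the sphere -/
def negSph {n : ℕ} (x : Sph n) : Sph n :=
  ⟨-(x : EuclideanSpace ℝ (Fin (n+1))), by
    have := x.2
    simp only [mem_sphere_iff_norm, sub_zero] at this ⊢
    simpa using this⟩

lemma negSph_negSph {n : ℕ} (x : Sph n) : negSph (negSph x) = x := by
  apply Subtype.ext; simp [negSph]

lemma continuous_negSph (n : ℕ) : Continuous (negSph (n := n)) :=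
  (continuous_neg.comp continuous_subtype_val).subtype_mk _

lemma quot_mk_negSph {n : ℕ} (x : Sph n) :
    Quot.mk (antipodalRel n) (negSph x) = Quot.mk (antipodalRel n) x :=
  (Quot.sound (by simp [antipodalRel, negSph])).symm

lemma quot_mk_eq_iff {n : ℕ} (x y : Sph n) :
    Quot.mk (antipodalRel n) x = Quot.mk (antipodalRel n) y ↔ (y = x ∨ y = negSph x) := by
  constructor
  · intro h
    have hinv : ∀ a b : Sph n, antipodalRel n a b →
        ({a, negSph a} : Set (Sph n)) = {b, negSph b} := by
      intro a b hab
      have hb : b = negSph a := Subtype.ext hab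
      have hnb : negSph b = a := by rw [hb, negSph_negSph]
      subst hb
      rw [negSph_negSph, Set.pair_comm]
    have := congrArg (Quot.lift (fun x : Sph n => ({x, negSph x} : Set (Sph n))) hinv) h
    have hx : x ∈ ({y, negSph y} : Set (Sph n)) := by
      simp only [Quot.lift_mk] at this; rw [← this]; exact Set.mem_insert _ _
    rcases hx with h1 | h1
    · exact Or.inl h1.symm
    · right
      rw [h1, negSph_negSph]
  · rintro (rfl | rfl)
    · rfl
    · exact (quot_mk_negSph x).symm



lemma isOpenQuotientMap_sphereQuot (n : ℕ) :
    IsOpenQuotientMap (Quot.mk (antipodalRel n)) := by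
  refine ⟨Quot.exists_rep, continuous_quot_mk, ?_⟩
  intro W hW
  rw [isOpen_coinduced]
  have : Quot.mk (antipodalRel n) ⁻¹' (Quot.mk (antipodalRel n) '' W) = W ∪ negSph '' W := by
    ext x
    simp only [Set.mem_preimage, Set.mem_image, Set.mem_union]
    constructor
    · rintro ⟨w, hw, hq⟩
      rcases (quot_mk_eq_iff w x).1 hq with rfl | rfl
      · exact Or.inl hw
      · exact Or.inr ⟨w, hw, rfl⟩
    · rintro (hx | ⟨w, hw, rfl⟩)
      · exact ⟨x, hx, rfl⟩
      · exact ⟨w, hw, (quot_mk_negSph w).symm⟩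
  rw [this]
  refine hW.union ?_
  have hneg : negSph '' W = negSph ⁻¹' W := by
    ext x
    simp only [Set.mem_image, Set.mem_preimage]
    constructor
    · rintro ⟨w, hw, rfl⟩; rwa [negSph_negSph]
    · intro hx; exact ⟨negSph x, hx, negSph_negSph x⟩
  rw [hneg]
  exact hW.preimage (continuous_negSph n)


/-- build a quaternion from four reals -/
def mkQ (a b c d : ℝ) : ℍ := ⟨a, b, c, d⟩

lemma continuous_mkQ_comp {X : Type*} [TopologicalSpace X] {f g h k : X → ℝ}
    (hf : Continuous f) (hg : Continuous g) (hh : Continuous h) (hk : Continuous k) :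
    Continuous (fun x => mkQ (f x) (g x) (h x) (k x)) := by
  have : (fun x => mkQ (f x) (g x) (h x) (k x)) =
      (fun x => Quaternion.linearIsometryEquivTuple.symm
        ((WithLp.equiv 2 (Fin 4 → ℝ)).symm ![f x, g x, h x, k x])) := by
    funext x
    rw [Quaternion.linearIsometryEquivTuple_symm_apply]
    rfl
  rw [this]
  refine Quaternion.linearIsometryEquivTuple.symm.continuous.comp
    ((PiLp.continuous_toLp 2 (fun _ : Fin 4 => ℝ)).comp
      (continuous_pi fun i => ?_))
  fin_cases i <;>
    simp only [Matrix.cons_val_zero, Matrix.cons_val_one, Matrix.head_cons,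
      Matrix.cons_val_two, Matrix.tail_cons, Matrix.cons_val_three] <;>
    assumption

/-- `ℝ⁵ ≃ ℍ × ℝ` -/
def e5 : E 5 ≃ ℍ × ℝ where
  toFun x := (mkQ (x 0) (x 1) (x 2) (x 3), x 4)
  invFun y := (WithLp.equiv 2 _).symm ![y.1.1, y.1.2, y.1.3, y.1.4, y.2]
  left_inv x := by
    ext i
    fin_cases i <;> rfl
  right_inv y := by
    ext <;> rfl

lemma e5_neg (x : E 5) : e5 (-x) = -(e5 x) := by
  ext <;> rfl

lemma continuous_e5 : Continuous e5 := by
  refine Continuous.prodMk ?_ (PiLp.continuous_apply 2 _ (4 : Fin 5))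
  exact continuous_mkQ_comp (PiLp.continuous_apply 2 _ _) (PiLp.continuous_apply 2 _ _)
    (PiLp.continuous_apply 2 _ _) (PiLp.continuous_apply 2 _ _)

lemma continuous_e5_symm : Continuous e5.symm := by
  refine (PiLp.continuous_toLp 2 (fun _ : Fin 5 => ℝ)).comp
    (continuous_pi fun i => ?_)
  fin_cases i <;>
    simp only [Matrix.cons_val_zero, Matrix.cons_val_one, Matrix.head_cons,
      Matrix.cons_val_two, Matrix.tail_cons, Matrix.cons_val_three, Matrix.cons_val_four] <;>
    first
      | exact continuous_snd
      | exact continuous_imI.comp continuous_fst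
      | exact continuous_imJ.comp continuous_fst
      | exact continuous_imK.comp continuous_fst
      | exact continuous_re.comp continuous_fst

lemma norm_quat (q : ℍ) : ‖q‖ ^ 2 = q.re ^ 2 + q.imI ^ 2 + q.imJ ^ 2 + q.imK ^ 2 := by
  rw [sq, ← Quaternion.normSq_eq_norm_mul_self, Quaternion.normSq_def']

lemma e5_norm (x : E 5) : ‖(e5 x).1‖ ^ 2 + (e5 x).2 ^ 2 = ‖x‖ ^ 2 := by
  rw [EuclideanSpace.norm_eq, Real.sq_sqrt (by positivity)]
  rw [norm_quat]
  simp only [Fin.sum_univ_five, Real.norm_eq_abs, sq_abs]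
  rfl

/-- `ℝ⁸ ≃ ℍ × ℍ` -/
def e8 : E 8 ≃ ℍ × ℍ where
  toFun x := (mkQ (x 0) (x 1) (x 2) (x 3), mkQ (x 4) (x 5) (x 6) (x 7))
  invFun y := (WithLp.equiv 2 _).symm
    ![y.1.1, y.1.2, y.1.3, y.1.4, y.2.1, y.2.2, y.2.3, y.2.4]
  left_inv x := by
    ext i
    fin_cases i <;> rfl
  right_inv y := by
    ext <;> rfl

lemma e8_neg (x : E 8) : e8 (-x) = -(e8 x) := by
  ext <;> rfl

lemma e8_symm_neg (y : ℍ × ℍ) : e8.symm (-y) = -(e8.symm y) := by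
  have := e8_neg (e8.symm y)
  rw [e8.apply_symm_apply] at this
  rw [← this, e8.symm_apply_apply]

lemma e5_symm_neg (y : ℍ × ℝ) : e5.symm (-y) = -(e5.symm y) := by
  have := e5_neg (e5.symm y)
  rw [e5.apply_symm_apply] at this
  rw [← this, e5.symm_apply_apply]

lemma continuous_e8 : Continuous e8 :=
  Continuous.prodMk
    (continuous_mkQ_comp (PiLp.continuous_apply 2 _ _) (PiLp.continuous_apply 2 _ _)
      (PiLp.continuous_apply 2 _ _) (PiLp.continuous_apply 2 _ _))
    (continuous_mkQ_comp (PiLp.continuous_apply 2 _ _) (PiLp.continuous_apply 2 _ _)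
      (PiLp.continuous_apply 2 _ _) (PiLp.continuous_apply 2 _ _))

lemma continuous_e8_symm : Continuous e8.symm := by
  refine (PiLp.continuous_toLp 2 (fun _ : Fin 8 => ℝ)).comp
    (continuous_pi fun i => ?_)
  fin_cases i <;>
    simp only [Matrix.cons_val_zero, Matrix.cons_val_one, Matrix.head_cons,
      Matrix.cons_val_two, Matrix.tail_cons, Matrix.cons_val_three, Matrix.cons_val_four] <;>
    first
      | exact Quaternion.continuous_re.comp continuous_fst
      | exact Quaternion.continuous_imI.comp continuous_fst
      | exact Quaternion.continuous_imJ.comp continuous_fst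
      | exact Quaternion.continuous_imK.comp continuous_fst
      | exact Quaternion.continuous_re.comp continuous_snd
      | exact Quaternion.continuous_imI.comp continuous_snd
      | exact Quaternion.continuous_imJ.comp continuous_snd
      | exact Quaternion.continuous_imK.comp continuous_snd

lemma e8_norm (x : E 8) : ‖(e8 x).1‖ ^ 2 + ‖(e8 x).2‖ ^ 2 = ‖x‖ ^ 2 := by
  rw [EuclideanSpace.norm_eq, Real.sq_sqrt (by positivity)]
  rw [norm_quat, norm_quat]
  simp only [Fin.sum_univ_eight, Real.norm_eq_abs, sq_abs]
  show (x 0)^2 + (x 1)^2 + (x 2)^2 + (x 3)^2 + ((x 4)^2 + (x 5)^2 + (x 6)^2 + (x 7)^2) = _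
  ring

/-! ### The quaternionic Hopf map -/

lemma sph_norm {n : ℕ} (x : Sph n) : ‖(x : E (n + 1))‖ = 1 :=
  mem_sphere_zero_iff_norm.1 x.2

lemma mem_sph_iff {n : ℕ} (v : E (n + 1)) : v ∈ Sph n ↔ ‖v‖ = 1 :=
  mem_sphere_zero_iff_norm

lemma norm_eq_one_of_sq {a : ℝ} (h : a ^ 2 = 1) (h0 : 0 ≤ a) : a = 1 := by nlinarith

/-- The Hopf map on coordinates. -/
def hQ (w : ℍ × ℍ) : ℍ × ℝ := ((2 : ℝ) • (w.1 * star w.2), ‖w.1‖ ^ 2 - ‖w.2‖ ^ 2)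

lemma hQ_norm (w : ℍ × ℍ) :
    ‖(hQ w).1‖ ^ 2 + (hQ w).2 ^ 2 = (‖w.1‖ ^ 2 + ‖w.2‖ ^ 2) ^ 2 := by
  simp only [hQ, norm_smul, norm_mul, norm_star, Real.norm_ofNat]
  ring

lemma hQ_neg (w : ℍ × ℍ) : hQ (-w) = hQ w := by
  simp only [hQ, Prod.fst_neg, Prod.snd_neg, star_neg, neg_mul_neg, norm_neg]

lemma continuous_hQ : Continuous hQ := by
  refine Continuous.prodMk ?_ ?_
  · exact (continuous_fst.mul (continuous_star.comp continuous_snd)).const_smul (2 : ℝ)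
  · exact ((continuous_norm.comp continuous_fst).pow 2).sub
      ((continuous_norm.comp continuous_snd).pow 2)

lemma e8_sph_norm (x : Sph 7) :
    ‖(e8 (x : E 8)).1‖ ^ 2 + ‖(e8 (x : E 8)).2‖ ^ 2 = 1 := by
  rw [e8_norm, sph_norm, one_pow]

/-- The Hopf map `S⁷ → S⁴`. -/
def pS (x : Sph 7) : Sph 4 :=
  ⟨e5.symm (hQ (e8 (x : E 8))), by
    rw [mem_sph_iff]
    have h1 := e5_norm (e5.symm (hQ (e8 (x : E 8))))
    rw [e5.apply_symm_apply] at h1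
    refine norm_eq_one_of_sq ?_ (norm_nonneg _)
    rw [← h1, hQ_norm, e8_sph_norm, one_pow]⟩

lemma continuous_pS : Continuous pS :=
  ((continuous_e5_symm.comp (continuous_hQ.comp
    (continuous_e8.comp continuous_subtype_val)))).subtype_mk _

lemma pS_negSph (x : Sph 7) : pS (negSph x) = pS x := by
  apply Subtype.ext
  show e5.symm (hQ (e8 (-(x : E 8)))) = _
  rw [e8_neg, hQ_neg]
  rfl

/-- The Hopf map `ℝP⁷ → S⁴`. -/
def pH : RealProjSpace 7 → Sph 4 :=
  Quot.lift pS (fun a b h => by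
    have : b = negSph a := Subtype.ext h
    rw [this, pS_negSph])

lemma continuous_pH : Continuous pH :=
  continuous_quot_lift _ continuous_pS

lemma pH_mk (x : Sph 7) : pH (Quot.mk (antipodalRel 7) x) = pS x := rfl

/-- `q`- and `t`-coordinates of a point of `S⁴`, and their relation -/
lemma e5_sph_norm (b : Sph 4) :
    ‖(e5 (b : E 5)).1‖ ^ 2 + (e5 (b : E 5)).2 ^ 2 = 1 := by
  rw [e5_norm, sph_norm, one_pow]

lemma t_abs_le (b : Sph 4) : (e5 (b : E 5)).2 ^ 2 ≤ 1 := by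
  have := e5_sph_norm b
  nlinarith [sq_nonneg ‖(e5 (b : E 5)).1‖]

lemma pS_coord (x : Sph 7) :
    e5 ((pS x : E 5)) = hQ (e8 (x : E 8)) := by
  show e5 (e5.symm _) = _
  rw [e5.apply_symm_apply]

/-! ### Chart over the complement of the south pole -/

def Uplus : Set (Sph 4) := {y | (e5 (y : E 5)).2 ≠ -1}

lemma isOpen_Uplus : IsOpen Uplus := by
  have hc : Continuous fun y : Sph 4 => (e5 (y : E 5)).2 :=
    (continuous_e5.comp continuous_subtype_val).snd
  exact (isOpen_compl_singleton).preimage hc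

lemma memUplus_iff (x : Sph 7) : pS x ∈ Uplus ↔ (e8 (x : E 8)).1 ≠ 0 := by
  have hx := e8_sph_norm x
  simp only [Uplus, Set.mem_setOf_eq, pS_coord, hQ]
  constructor
  · intro h hA
    apply h
    rw [hA] at hx ⊢
    simp only [norm_zero] at hx ⊢
    nlinarith
  · intro hA h
    apply hA
    have : ‖(e8 (x : E 8)).1‖ ^ 2 = 0 := by nlinarith
    have := pow_eq_zero_iff (n := 2) (by norm_num) |>.1 this
    exact norm_eq_zero.1 this

open scoped Classical

/-- normalization of a quaternion (junk value `1` at `0`). -/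
def unitQ (a : ℍ) : ℍ := if a = 0 then 1 else ‖a‖⁻¹ • a

lemma norm_unitQ (a : ℍ) : ‖unitQ a‖ = 1 := by
  unfold unitQ
  split_ifs with h
  · simp
  · rw [norm_smul, norm_inv, norm_norm, inv_mul_cancel₀ (norm_ne_zero_iff.2 h)]

lemma unitQ_neg (a : ℍ) (h : a ≠ 0) : unitQ (-a) = -unitQ a := by
  unfold unitQ
  rw [if_neg (neg_ne_zero.2 h), if_neg h, norm_neg, smul_neg]

lemma unitQ_of_ne (a : ℍ) (h : a ≠ 0) : unitQ a = ‖a‖⁻¹ • a := if_neg h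

/-- fiber coordinate for the first chart -/
def phiP (x : Sph 7) : Sph 3 :=
  ⟨linearIsometryEquivTuple (unitQ (e8 (x : E 8)).1), by
    rw [mem_sph_iff, linearIsometryEquivTuple.norm_map, norm_unitQ]⟩

lemma phiP_negSph (x : Sph 7) :
    Quot.mk (antipodalRel 3) (phiP (negSph x)) = Quot.mk (antipodalRel 3) (phiP x) := by
  by_cases h : (e8 (x : E 8)).1 = 0
  · congr 1
    apply Subtype.ext
    show linearIsometryEquivTuple (unitQ (e8 (-(x : E 8))).1) = _
    rw [e8_neg]
    show linearIsometryEquivTuple (unitQ (-(e8 (x : E 8)).1)) = _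
    rw [h, neg_zero]
    show _ = linearIsometryEquivTuple (unitQ (e8 (x : E 8)).1)
    rw [h]
  · refine (Quot.sound ?_).symm
    show (phiP (negSph x) : E 4) = -(phiP x : E 4)
    show linearIsometryEquivTuple (unitQ (e8 (-(x : E 8))).1) = _
    rw [e8_neg]
    show linearIsometryEquivTuple (unitQ (-(e8 (x : E 8)).1)) = _
    rw [unitQ_neg _ h, map_neg]
    rfl

/-- the fiber projection `ℝP⁷ → ℝP³` (only meaningful over `Uplus`). -/
def rhoP : RealProjSpace 7 → RealProjSpace 3 :=
  Quot.lift (fun x => Quot.mk (antipodalRel 3) (phiP x)) (fun a b h => by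
    have hb : b = negSph a := Subtype.ext h
    show Quot.mk _ (phiP a) = Quot.mk _ (phiP b)
    rw [hb, phiP_negSph])

/-- radius function -/
def rad (y : Sph 4) : ℝ := Real.sqrt ((1 + (e5 (y : E 5)).2) / 2)

lemma continuous_rad : Continuous rad :=
  Real.continuous_sqrt.comp
    ((continuous_const.add (continuous_e5.comp continuous_subtype_val).snd).div_const 2)

lemma rad_pos {y : Sph 4} (hy : y ∈ Uplus) : 0 < rad y := by
  have h1 : (e5 (y : E 5)).2 ^ 2 ≤ 1 := t_abs_le y
  have h2 : -1 ≤ (e5 (y : E 5)).2 := by nlinarith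
  have h3 : -1 < (e5 (y : E 5)).2 := lt_of_le_of_ne h2 (Ne.symm hy)
  exact Real.sqrt_pos.2 (by linarith)

lemma rad_sq {y : Sph 4} (hy : y ∈ Uplus) :
    rad y ^ 2 = (1 + (e5 (y : E 5)).2) / 2 := by
  have h1 : (e5 (y : E 5)).2 ^ 2 ≤ 1 := t_abs_le y
  have h2 : -1 ≤ (e5 (y : E 5)).2 := by nlinarith
  exact Real.sq_sqrt (by linarith)

/-- the chart inverse, on coordinates -/
def insQ (y : Sph 4) (u : Sph 3) : ℍ × ℍ :=
  ((rad y) • (linearIsometryEquivTuple.symm (u : E 4)),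
    (2 * rad y)⁻¹ • (star (e5 (y : E 5)).1 * linearIsometryEquivTuple.symm (u : E 4)))

lemma insQ_norm {y : Sph 4} (hy : y ∈ Uplus) (u : Sph 3) :
    ‖(insQ y u).1‖ ^ 2 + ‖(insQ y u).2‖ ^ 2 = 1 := by
  have hu : ‖linearIsometryEquivTuple.symm (u : E 4)‖ = 1 := by
    rw [linearIsometryEquivTuple.symm.norm_map, sph_norm]
  have hr := rad_pos hy
  have hr2 := rad_sq hy
  have hq := e5_sph_norm y
  have h2 : -1 < (e5 (y : E 5)).2 := by
    have h1 : (e5 (y : E 5)).2 ^ 2 ≤ 1 := t_abs_le y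
    have : -1 ≤ (e5 (y : E 5)).2 := by nlinarith
    exact lt_of_le_of_ne this (Ne.symm hy)
  simp only [insQ, norm_smul, norm_mul, norm_star, norm_inv, Real.norm_eq_abs,
    abs_of_pos hr, abs_of_pos (by linarith : (0:ℝ) < 2 * rad y), hu, mul_one]
  rw [mul_pow, inv_pow, mul_pow]
  field_simp
  rw [abs_two]
  nlinarith [hr2, hq]

/-- the chart inverse, as a map to `S⁷` -/
def insS (w : ↥Uplus × Sph 3) : Sph 7 :=
  ⟨e8.symm (insQ (w.1 : Sph 4) w.2), by
    rw [mem_sph_iff]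
    refine norm_eq_one_of_sq ?_ (norm_nonneg _)
    have h1 := e8_norm (e8.symm (insQ (w.1 : Sph 4) w.2))
    rw [e8.apply_symm_apply] at h1
    rw [← h1, insQ_norm w.1.2]⟩

lemma continuous_insS : Continuous insS := by
  refine (continuous_e8_symm.comp ?_).subtype_mk _
  have hval : Continuous fun w : ↥Uplus × Sph 3 => ((w.1 : Sph 4) : E 5) :=
    continuous_subtype_val.comp (continuous_subtype_val.comp continuous_fst)
  have hrad : Continuous fun w : ↥Uplus × Sph 3 => rad (w.1 : Sph 4) :=
    continuous_rad.comp (continuous_subtype_val.comp continuous_fst)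
  have hu : Continuous fun w : ↥Uplus × Sph 3 =>
      linearIsometryEquivTuple.symm ((w.2 : Sph 3) : E 4) :=
    linearIsometryEquivTuple.symm.continuous.comp
      (continuous_subtype_val.comp continuous_snd)
  refine Continuous.prodMk (hrad.smul hu) ?_
  refine Continuous.smul (M := ℝ) ?_ ?_
  · refine Continuous.inv₀ (continuous_const.mul hrad) ?_
    intro w
    have := rad_pos w.1.2
    positivity
  · exact (continuous_star.comp ((continuous_e5.comp hval).fst)).mul hu

/-- soundness of the chart inverse under the antipodal map on the fiber -/
lemma insS_negSph (b : ↥Uplus) (u : Sph 3) :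
    insS (b, negSph u) = negSph (insS (b, u)) := by
  apply Subtype.ext
  show e8.symm (insQ (b : Sph 4) (negSph u)) = -(e8.symm (insQ (b : Sph 4) u))
  rw [← e8_symm_neg]
  congr 1
  simp only [insQ, negSph, map_neg, smul_neg, mul_neg, Prod.neg_mk]

lemma unit_mul_star {u : ℍ} (hu : ‖u‖ = 1) : u * star u = 1 := by
  rw [Quaternion.self_mul_star, Quaternion.normSq_eq_norm_mul_self, hu, one_mul]
  exact_mod_cast rfl

lemma star_mul_unit {u : ℍ} (hu : ‖u‖ = 1) : star u * u = 1 := by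
  rw [Quaternion.star_mul_self, Quaternion.normSq_eq_norm_mul_self, hu, one_mul]
  exact_mod_cast rfl

lemma hQ_insQ {y : Sph 4} (hy : y ∈ Uplus) (u : Sph 3) :
    hQ (insQ y u) = e5 (y : E 5) := by
  set q := (e5 (y : E 5)).1 with hqdef
  set t := (e5 (y : E 5)).2 with htdef
  set r := rad y with hrdef
  set u' := linearIsometryEquivTuple.symm ((u : Sph 3) : E 4) with hudef
  have hu : ‖u'‖ = 1 := by rw [hudef, linearIsometryEquivTuple.symm.norm_map, sph_norm]
  have hr := rad_pos hy
  have hr2 := rad_sq hy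
  have hqt : ‖q‖ ^ 2 + t ^ 2 = 1 := e5_sph_norm y
  have hrne : r ≠ 0 := ne_of_gt hr
  have h1 : (hQ (insQ y u)).1 = q := by
    show (2 : ℝ) • ((r • u') * star ((2 * r)⁻¹ • (star q * u'))) = q
    rw [Quaternion.star_smul, star_mul, star_star]
    rw [smul_mul_assoc, mul_smul_comm, smul_smul, smul_smul]
    rw [← mul_assoc u', unit_mul_star hu, one_mul]
    rw [show (2 : ℝ) * r * (2 * r)⁻¹ = 1 by field_simp, one_smul]
  have h2 : (hQ (insQ y u)).2 = t := by
    show ‖r • u'‖ ^ 2 - ‖(2 * r)⁻¹ • (star q * u')‖ ^ 2 = t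
    rw [norm_smul, norm_smul, norm_mul, norm_star, hu, mul_one, mul_one,
      norm_inv, Real.norm_eq_abs, Real.norm_eq_abs, abs_of_pos hr,
      abs_of_pos (by linarith : (0:ℝ) < 2 * r)]
    rw [mul_pow, inv_pow, mul_pow]
    have h4 : (4 : ℝ) * r ^ 2 ≠ 0 := by positivity
    field_simp
    nlinarith [hr2, hqt]
  calc hQ (insQ y u) = ((hQ (insQ y u)).1, (hQ (insQ y u)).2) := rfl
    _ = (q, t) := by rw [h1, h2]

lemma pS_insS (w : ↥Uplus × Sph 3) : pS (insS w) = (w.1 : Sph 4) := by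
  apply Subtype.ext
  show e5.symm (hQ (e8 (e8.symm (insQ (w.1 : Sph 4) w.2)))) = _
  rw [e8.apply_symm_apply, hQ_insQ w.1.2, e5.symm_apply_apply]

lemma phiP_insS (w : ↥Uplus × Sph 3) : phiP (insS w) = w.2 := by
  apply Subtype.ext
  have hr := rad_pos w.1.2
  set u' := linearIsometryEquivTuple.symm ((w.2 : Sph 3) : E 4) with hudef
  have hu : ‖u'‖ = 1 := by rw [hudef, linearIsometryEquivTuple.symm.norm_map, sph_norm]
  show linearIsometryEquivTuple (unitQ (e8 (e8.symm (insQ (w.1 : Sph 4) w.2))).1) = _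
  rw [e8.apply_symm_apply]
  show linearIsometryEquivTuple (unitQ (rad (w.1 : Sph 4) • u')) = _
  have hne : rad (w.1 : Sph 4) • u' ≠ 0 := by
    intro h
    rcases smul_eq_zero.1 h with h | h
    · exact (ne_of_gt hr) h
    · rw [h, norm_zero] at hu; norm_num at hu
  rw [unitQ_of_ne _ hne, norm_smul, Real.norm_eq_abs, abs_of_pos hr, hu, mul_one,
    smul_smul, inv_mul_cancel₀ (ne_of_gt hr), one_smul, hudef,
    linearIsometryEquivTuple.apply_symm_apply]

lemma insS_phiP (x : Sph 7) (hm : pS x ∈ Uplus) :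
    insS (⟨pS x, hm⟩, phiP x) = x := by
  apply Subtype.ext
  have hA : (e8 (x : E 8)).1 ≠ 0 := (memUplus_iff x).1 hm
  set A := (e8 (x : E 8)).1 with hAdef
  set B := (e8 (x : E 8)).2 with hBdef
  have hAB : ‖A‖ ^ 2 + ‖B‖ ^ 2 = 1 := e8_sph_norm x
  have hnA : ‖A‖ ≠ 0 := norm_ne_zero_iff.2 hA
  have hcoord : e5 ((pS x : E 5)) = ((2 : ℝ) • (A * star B), ‖A‖ ^ 2 - ‖B‖ ^ 2) :=
    pS_coord x
  have hq : (e5 ((pS x : E 5))).1 = (2 : ℝ) • (A * star B) := by rw [hcoord]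
  have ht : (e5 ((pS x : E 5))).2 = ‖A‖ ^ 2 - ‖B‖ ^ 2 := by rw [hcoord]
  have hrad : rad (pS x) = ‖A‖ := by
    rw [rad, ht]
    rw [show (1 + (‖A‖ ^ 2 - ‖B‖ ^ 2)) / 2 = ‖A‖ ^ 2 by nlinarith]
    exact Real.sqrt_sq (norm_nonneg A)
  have hu' : linearIsometryEquivTuple.symm ((phiP x : Sph 3) : E 4) = ‖A‖⁻¹ • A := by
    show linearIsometryEquivTuple.symm (linearIsometryEquivTuple (unitQ A)) = _
    rw [linearIsometryEquivTuple.symm_apply_apply, unitQ_of_ne _ hA]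
  show e8.symm (insQ (pS x) (phiP x)) = (x : E 8)
  have c1 : ‖A‖ • (‖A‖⁻¹ • A) = A := by
    rw [smul_smul, mul_inv_cancel₀ hnA, one_smul]
  have c2 : (2 * ‖A‖)⁻¹ • (star ((2 : ℝ) • (A * star B)) * (‖A‖⁻¹ • A)) = B := by
    rw [Quaternion.star_smul, star_mul, star_star, smul_mul_assoc, mul_smul_comm,
      mul_assoc, Quaternion.star_mul_self, Quaternion.mul_coe_eq_smul,
      Quaternion.normSq_eq_norm_mul_self, smul_smul, smul_smul, smul_smul]
    rw [show (2 * ‖A‖)⁻¹ * 2 * ‖A‖⁻¹ * (‖A‖ * ‖A‖) = 1 by field_simp, one_smul]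
  have hins : insQ (pS x) (phiP x) = (A, B) := by
    unfold insQ
    rw [hu', hq, hrad]
    rw [Prod.mk.injEq]
    exact ⟨c1, c2⟩
  rw [hins]
  show e8.symm (e8 (x : E 8)) = (x : E 8)
  rw [e8.symm_apply_apply]

/-! ### Assembly of the chart over `Uplus` -/

def PP : Set (RealProjSpace 7) := pH ⁻¹' Uplus

lemma isOpen_PP : IsOpen PP := isOpen_Uplus.preimage continuous_pH

def PhiP : ↥PP → ↥Uplus × RealProjSpace 3 :=
  fun z => (⟨pH z, z.2⟩, rhoP (z : RealProjSpace 7))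

def PsiP0 (bb : ↥Uplus) : RealProjSpace 3 → RealProjSpace 7 :=
  Quot.lift (fun u => Quot.mk (antipodalRel 7) (insS (bb, u))) (fun u v h => by
    have hv : v = negSph u := Subtype.ext h
    show Quot.mk (antipodalRel 7) (insS (bb, u)) = Quot.mk (antipodalRel 7) (insS (bb, v))
    rw [hv, insS_negSph, quot_mk_negSph])

lemma PsiP0_mem (bb : ↥Uplus) (m : RealProjSpace 3) : PsiP0 bb m ∈ PP := by
  induction m using Quot.ind with
  | _ u =>
    show pS (insS (bb, u)) ∈ Uplus
    rw [pS_insS]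
    exact bb.2

def PsiP : ↥Uplus × RealProjSpace 3 → ↥PP :=
  fun w => ⟨PsiP0 w.1 w.2, PsiP0_mem w.1 w.2⟩

lemma PsiP_PhiP : Function.LeftInverse PsiP PhiP := by
  rintro ⟨ζ, hζ⟩
  apply Subtype.ext
  obtain ⟨x, rfl⟩ := Quot.exists_rep ζ
  show PsiP0 ⟨pS x, hζ⟩ (Quot.mk (antipodalRel 3) (phiP x)) = Quot.mk (antipodalRel 7) x
  show Quot.mk (antipodalRel 7) (insS (⟨pS x, hζ⟩, phiP x)) = Quot.mk (antipodalRel 7) x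
  rw [insS_phiP x hζ]

lemma PhiP_PsiP : Function.RightInverse PsiP PhiP := by
  rintro ⟨bb, m⟩
  induction m using Quot.ind with
  | _ u =>
    refine Prod.ext (Subtype.ext ?_) ?_
    · show pS (insS (bb, u)) = (bb : Sph 4)
      exact pS_insS _
    · show Quot.mk (antipodalRel 3) (phiP (insS (bb, u))) = Quot.mk (antipodalRel 3) u
      rw [phiP_insS]

/-- normalized quaternion on the sphere -/
def nrmSph (a : ℍ) (h : a ≠ 0) : Sph 3 :=
  ⟨linearIsometryEquivTuple (‖a‖⁻¹ • a), by
    rw [mem_sph_iff, linearIsometryEquivTuple.norm_map, norm_smul, norm_inv, norm_norm,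
      inv_mul_cancel₀ (norm_ne_zero_iff.2 h)]⟩

lemma phiP_eq_nrmSph (x : Sph 7) (h : (e8 (x : E 8)).1 ≠ 0) :
    phiP x = nrmSph (e8 (x : E 8)).1 h :=
  Subtype.ext (by
    show linearIsometryEquivTuple (unitQ _) = _
    rw [unitQ_of_ne _ h]
    rfl)

lemma continuous_PhiP : Continuous PhiP := by
  have hquot : Topology.IsQuotientMap (PP.restrictPreimage (Quot.mk (antipodalRel 7))) :=
    (isOpenQuotientMap_sphereQuot 7).isQuotientMap.restrictPreimage_isOpen isOpen_PP
  rw [hquot.continuous_iff]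
  have hA : ∀ v : ↥(Quot.mk (antipodalRel 7) ⁻¹' PP), (e8 ((v : Sph 7) : E 8)).1 ≠ 0 :=
    fun v => (memUplus_iff _).1 v.2
  have hAc : Continuous fun v : ↥(Quot.mk (antipodalRel 7) ⁻¹' PP) =>
      (e8 ((v : Sph 7) : E 8)).1 :=
    (continuous_e8.comp (continuous_subtype_val.comp continuous_subtype_val)).fst
  have hphi : Continuous fun v : ↥(Quot.mk (antipodalRel 7) ⁻¹' PP) =>
      phiP (v : Sph 7) := by
    refine Continuous.congr (f := fun v : ↥(Quot.mk (antipodalRel 7) ⁻¹' PP) =>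
      nrmSph (e8 ((v : Sph 7) : E 8)).1 (hA v)) ?_ ?_
    · refine Continuous.subtype_mk ?_ _
      exact linearIsometryEquivTuple.continuous.comp
        (((hAc.norm).inv₀ fun v => norm_ne_zero_iff.2 (hA v)).smul hAc)
    · exact fun v => (phiP_eq_nrmSph _ (hA v)).symm
  show Continuous fun v : ↥(Quot.mk (antipodalRel 7) ⁻¹' PP) =>
    ((⟨pS (v : Sph 7), v.2⟩ : ↥Uplus), Quot.mk (antipodalRel 3) (phiP (v : Sph 7)))
  refine Continuous.prodMk ?_ ?_
  · exact ((continuous_pS.comp continuous_subtype_val).subtype_mk _)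
  · exact continuous_quot_mk.comp hphi

lemma continuous_PsiP : Continuous PsiP := by
  refine Continuous.subtype_mk ?_ _
  have hq := (IsOpenQuotientMap.id (X := ↥Uplus)).prodMap (isOpenQuotientMap_sphereQuot 3)
  rw [← hq.continuous_comp_iff]
  exact continuous_quot_mk.comp continuous_insS

def chartPlus : ↥PP ≃ₜ ↥Uplus × RealProjSpace 3 where
  toFun := PhiP
  invFun := PsiP
  left_inv := PsiP_PhiP
  right_inv := PhiP_PsiP
  continuous_toFun := continuous_PhiP
  continuous_invFun := continuous_PsiP

/-! ### Chart over the complement of the north pole -/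

def Uminus : Set (Sph 4) := {y | (e5 (y : E 5)).2 ≠ 1}

lemma isOpen_Uminus : IsOpen Uminus := by
  have hc : Continuous fun y : Sph 4 => (e5 (y : E 5)).2 :=
    (continuous_e5.comp continuous_subtype_val).snd
  exact (isOpen_compl_singleton).preimage hc

lemma memUminus_iff (x : Sph 7) : pS x ∈ Uminus ↔ (e8 (x : E 8)).2 ≠ 0 := by
  have hx := e8_sph_norm x
  simp only [Uminus, Set.mem_setOf_eq, pS_coord, hQ]
  constructor
  · intro h hB
    apply h
    rw [hB] at hx ⊢
    simp only [norm_zero] at hx ⊢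
    nlinarith
  · intro hB h
    apply hB
    have : ‖(e8 (x : E 8)).2‖ ^ 2 = 0 := by nlinarith
    have := pow_eq_zero_iff (n := 2) (by norm_num) |>.1 this
    exact norm_eq_zero.1 this

/-- fiber coordinate for the second chart -/
def phiM (x : Sph 7) : Sph 3 :=
  ⟨linearIsometryEquivTuple (unitQ (e8 (x : E 8)).2), by
    rw [mem_sph_iff, linearIsometryEquivTuple.norm_map, norm_unitQ]⟩

lemma phiM_negSph (x : Sph 7) :
    Quot.mk (antipodalRel 3) (phiM (negSph x)) = Quot.mk (antipodalRel 3) (phiM x) := by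
  by_cases h : (e8 (x : E 8)).2 = 0
  · congr 1
    apply Subtype.ext
    show linearIsometryEquivTuple (unitQ (e8 (-(x : E 8))).2) = _
    rw [e8_neg]
    show linearIsometryEquivTuple (unitQ (-(e8 (x : E 8)).2)) = _
    rw [h, neg_zero]
    show _ = linearIsometryEquivTuple (unitQ (e8 (x : E 8)).2)
    rw [h]
  · refine (Quot.sound ?_).symm
    show (phiM (negSph x) : E 4) = -(phiM x : E 4)
    show linearIsometryEquivTuple (unitQ (e8 (-(x : E 8))).2) = _
    rw [e8_neg]
    show linearIsometryEquivTuple (unitQ (-(e8 (x : E 8)).2)) = _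
    rw [unitQ_neg _ h, map_neg]
    rfl

/-- radius function for second chart -/
def radM (y : Sph 4) : ℝ := Real.sqrt ((1 - (e5 (y : E 5)).2) / 2)

lemma continuous_radM : Continuous radM :=
  Real.continuous_sqrt.comp
    ((continuous_const.sub (continuous_e5.comp continuous_subtype_val).snd).div_const 2)

lemma radM_pos {y : Sph 4} (hy : y ∈ Uminus) : 0 < radM y := by
  have h1 : (e5 (y : E 5)).2 ^ 2 ≤ 1 := t_abs_le y
  have h2 : (e5 (y : E 5)).2 ≤ 1 := by nlinarith
  have h3 : (e5 (y : E 5)).2 < 1 := lt_of_le_of_ne h2 hy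
  exact Real.sqrt_pos.2 (by linarith)

lemma radM_sq {y : Sph 4} (hy : y ∈ Uminus) :
    radM y ^ 2 = (1 - (e5 (y : E 5)).2) / 2 := by
  have h1 : (e5 (y : E 5)).2 ^ 2 ≤ 1 := t_abs_le y
  have h2 : (e5 (y : E 5)).2 ≤ 1 := by nlinarith
  exact Real.sq_sqrt (by linarith)

/-- the chart inverse for the second chart, on coordinates -/
def insQM (y : Sph 4) (u : Sph 3) : ℍ × ℍ :=
  ((2 * radM y)⁻¹ • ((e5 (y : E 5)).1 * linearIsometryEquivTuple.symm (u : E 4)),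
    (radM y) • (linearIsometryEquivTuple.symm (u : E 4)))

lemma insQM_norm {y : Sph 4} (hy : y ∈ Uminus) (u : Sph 3) :
    ‖(insQM y u).1‖ ^ 2 + ‖(insQM y u).2‖ ^ 2 = 1 := by
  have hu : ‖linearIsometryEquivTuple.symm (u : E 4)‖ = 1 := by
    rw [linearIsometryEquivTuple.symm.norm_map, sph_norm]
  have hr := radM_pos hy
  have hr2 := radM_sq hy
  have hq := e5_sph_norm y
  simp only [insQM, norm_smul, norm_mul, norm_inv, Real.norm_eq_abs,
    abs_of_pos hr, abs_of_pos (by linarith : (0:ℝ) < 2 * radM y), hu, mul_one]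
  rw [mul_pow, inv_pow, mul_pow]
  field_simp
  rw [abs_two]
  nlinarith [hr2, hq]

/-- the second chart inverse, as a map to `S⁷` -/
def insSM (w : ↥Uminus × Sph 3) : Sph 7 :=
  ⟨e8.symm (insQM (w.1 : Sph 4) w.2), by
    rw [mem_sph_iff]
    refine norm_eq_one_of_sq ?_ (norm_nonneg _)
    have h1 := e8_norm (e8.symm (insQM (w.1 : Sph 4) w.2))
    rw [e8.apply_symm_apply] at h1
    rw [← h1, insQM_norm w.1.2]⟩

lemma continuous_insSM : Continuous insSM := by
  refine (continuous_e8_symm.comp ?_).subtype_mk _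
  have hval : Continuous fun w : ↥Uminus × Sph 3 => ((w.1 : Sph 4) : E 5) :=
    continuous_subtype_val.comp (continuous_subtype_val.comp continuous_fst)
  have hrad : Continuous fun w : ↥Uminus × Sph 3 => radM (w.1 : Sph 4) :=
    continuous_radM.comp (continuous_subtype_val.comp continuous_fst)
  have hu : Continuous fun w : ↥Uminus × Sph 3 =>
      linearIsometryEquivTuple.symm ((w.2 : Sph 3) : E 4) :=
    linearIsometryEquivTuple.symm.continuous.comp
      (continuous_subtype_val.comp continuous_snd)
  refine Continuous.prodMk ?_ (hrad.smul hu)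
  refine Continuous.smul (M := ℝ) ?_ ?_
  · refine Continuous.inv₀ (continuous_const.mul hrad) ?_
    intro w
    have := radM_pos w.1.2
    positivity
  · exact ((continuous_e5.comp hval).fst).mul hu

lemma insSM_negSph (b : ↥Uminus) (u : Sph 3) :
    insSM (b, negSph u) = negSph (insSM (b, u)) := by
  apply Subtype.ext
  show e8.symm (insQM (b : Sph 4) (negSph u)) = -(e8.symm (insQM (b : Sph 4) u))
  rw [← e8_symm_neg]
  congr 1
  simp only [insQM, negSph, map_neg, smul_neg, mul_neg, Prod.neg_mk]

lemma hQ_insQM {y : Sph 4} (hy : y ∈ Uminus) (u : Sph 3) :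
    hQ (insQM y u) = e5 (y : E 5) := by
  set q := (e5 (y : E 5)).1 with hqdef
  set t := (e5 (y : E 5)).2 with htdef
  set s := radM y with hrdef
  set u' := linearIsometryEquivTuple.symm ((u : Sph 3) : E 4) with hudef
  have hu : ‖u'‖ = 1 := by rw [hudef, linearIsometryEquivTuple.symm.norm_map, sph_norm]
  have hr := radM_pos hy
  have hr2 := radM_sq hy
  have hqt : ‖q‖ ^ 2 + t ^ 2 = 1 := e5_sph_norm y
  have hrne : s ≠ 0 := ne_of_gt hr
  have h1 : (hQ (insQM y u)).1 = q := by
    show (2 : ℝ) • (((2 * s)⁻¹ • (q * u')) * star (s • u')) = q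
    rw [Quaternion.star_smul]
    rw [smul_mul_assoc, mul_smul_comm, smul_smul, smul_smul]
    rw [mul_assoc q, unit_mul_star hu, mul_one]
    rw [show (2 : ℝ) * (2 * s)⁻¹ * s = 1 by field_simp, one_smul]
  have h2 : (hQ (insQM y u)).2 = t := by
    show ‖(2 * s)⁻¹ • (q * u')‖ ^ 2 - ‖s • u'‖ ^ 2 = t
    rw [norm_smul, norm_smul, norm_mul, hu, mul_one, mul_one,
      norm_inv, Real.norm_eq_abs, Real.norm_eq_abs, abs_of_pos hr,
      abs_of_pos (by linarith : (0:ℝ) < 2 * s)]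
    rw [mul_pow, inv_pow, mul_pow]
    have h4 : (4 : ℝ) * s ^ 2 ≠ 0 := by positivity
    field_simp
    nlinarith [hr2, hqt]
  calc hQ (insQM y u) = ((hQ (insQM y u)).1, (hQ (insQM y u)).2) := rfl
    _ = (q, t) := by rw [h1, h2]

lemma pS_insSM (w : ↥Uminus × Sph 3) : pS (insSM w) = (w.1 : Sph 4) := by
  apply Subtype.ext
  show e5.symm (hQ (e8 (e8.symm (insQM (w.1 : Sph 4) w.2)))) = _
  rw [e8.apply_symm_apply, hQ_insQM w.1.2, e5.symm_apply_apply]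

lemma phiM_insSM (w : ↥Uminus × Sph 3) : phiM (insSM w) = w.2 := by
  apply Subtype.ext
  have hr := radM_pos w.1.2
  set u' := linearIsometryEquivTuple.symm ((w.2 : Sph 3) : E 4) with hudef
  have hu : ‖u'‖ = 1 := by rw [hudef, linearIsometryEquivTuple.symm.norm_map, sph_norm]
  show linearIsometryEquivTuple (unitQ (e8 (e8.symm (insQM (w.1 : Sph 4) w.2))).2) = _
  rw [e8.apply_symm_apply]
  show linearIsometryEquivTuple (unitQ (radM (w.1 : Sph 4) • u')) = _
  have hne : radM (w.1 : Sph 4) • u' ≠ 0 := by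
    intro h
    rcases smul_eq_zero.1 h with h | h
    · exact (ne_of_gt hr) h
    · rw [h, norm_zero] at hu; norm_num at hu
  rw [unitQ_of_ne _ hne, norm_smul, Real.norm_eq_abs, abs_of_pos hr, hu, mul_one,
    smul_smul, inv_mul_cancel₀ (ne_of_gt hr), one_smul, hudef,
    linearIsometryEquivTuple.apply_symm_apply]

lemma insSM_phiM (x : Sph 7) (hm : pS x ∈ Uminus) :
    insSM (⟨pS x, hm⟩, phiM x) = x := by
  apply Subtype.ext
  have hB : (e8 (x : E 8)).2 ≠ 0 := (memUminus_iff x).1 hm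
  set A := (e8 (x : E 8)).1 with hAdef
  set B := (e8 (x : E 8)).2 with hBdef
  have hAB : ‖A‖ ^ 2 + ‖B‖ ^ 2 = 1 := e8_sph_norm x
  have hnB : ‖B‖ ≠ 0 := norm_ne_zero_iff.2 hB
  have hcoord : e5 ((pS x : E 5)) = ((2 : ℝ) • (A * star B), ‖A‖ ^ 2 - ‖B‖ ^ 2) :=
    pS_coord x
  have hq : (e5 ((pS x : E 5))).1 = (2 : ℝ) • (A * star B) := by rw [hcoord]
  have ht : (e5 ((pS x : E 5))).2 = ‖A‖ ^ 2 - ‖B‖ ^ 2 := by rw [hcoord]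
  have hrad : radM (pS x) = ‖B‖ := by
    rw [radM, ht]
    rw [show (1 - (‖A‖ ^ 2 - ‖B‖ ^ 2)) / 2 = ‖B‖ ^ 2 by nlinarith]
    exact Real.sqrt_sq (norm_nonneg B)
  have hu' : linearIsometryEquivTuple.symm ((phiM x : Sph 3) : E 4) = ‖B‖⁻¹ • B := by
    show linearIsometryEquivTuple.symm (linearIsometryEquivTuple (unitQ B)) = _
    rw [linearIsometryEquivTuple.symm_apply_apply, unitQ_of_ne _ hB]
  show e8.symm (insQM (pS x) (phiM x)) = (x : E 8)
  have c2 : ‖B‖ • (‖B‖⁻¹ • B) = B := by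
    rw [smul_smul, mul_inv_cancel₀ hnB, one_smul]
  have c1 : (2 * ‖B‖)⁻¹ • (((2 : ℝ) • (A * star B)) * (‖B‖⁻¹ • B)) = A := by
    rw [smul_mul_assoc, mul_smul_comm, mul_assoc, Quaternion.star_mul_self,
      Quaternion.mul_coe_eq_smul, Quaternion.normSq_eq_norm_mul_self,
      smul_smul, smul_smul, smul_smul]
    rw [show (2 * ‖B‖)⁻¹ * 2 * ‖B‖⁻¹ * (‖B‖ * ‖B‖) = 1 by field_simp, one_smul]
  have hins : insQM (pS x) (phiM x) = (A, B) := by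
    unfold insQM
    rw [hu', hq, hrad]
    rw [Prod.mk.injEq]
    exact ⟨c1, c2⟩
  rw [hins]
  show e8.symm (e8 (x : E 8)) = (x : E 8)
  rw [e8.symm_apply_apply]

/-! ### Assembly of the chart over `Uminus` -/

def rhoM : RealProjSpace 7 → RealProjSpace 3 :=
  Quot.lift (fun x => Quot.mk (antipodalRel 3) (phiM x)) (fun a b h => by
    have hb : b = negSph a := Subtype.ext h
    show Quot.mk _ (phiM a) = Quot.mk _ (phiM b)
    rw [hb, phiM_negSph])

def PM : Set (RealProjSpace 7) := pH ⁻¹' Uminus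

lemma isOpen_PM : IsOpen PM := isOpen_Uminus.preimage continuous_pH

def PhiM : ↥PM → ↥Uminus × RealProjSpace 3 :=
  fun z => (⟨pH z, z.2⟩, rhoM (z : RealProjSpace 7))

def PsiM0 (bb : ↥Uminus) : RealProjSpace 3 → RealProjSpace 7 :=
  Quot.lift (fun u => Quot.mk (antipodalRel 7) (insSM (bb, u))) (fun u v h => by
    have hv : v = negSph u := Subtype.ext h
    show Quot.mk (antipodalRel 7) (insSM (bb, u)) = Quot.mk (antipodalRel 7) (insSM (bb, v))
    rw [hv, insSM_negSph, quot_mk_negSph])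

lemma PsiM0_mem (bb : ↥Uminus) (m : RealProjSpace 3) : PsiM0 bb m ∈ PM := by
  induction m using Quot.ind with
  | _ u =>
    show pS (insSM (bb, u)) ∈ Uminus
    rw [pS_insSM]
    exact bb.2

def PsiM : ↥Uminus × RealProjSpace 3 → ↥PM :=
  fun w => ⟨PsiM0 w.1 w.2, PsiM0_mem w.1 w.2⟩

lemma PsiM_PhiM : Function.LeftInverse PsiM PhiM := by
  rintro ⟨ζ, hζ⟩
  apply Subtype.ext
  obtain ⟨x, rfl⟩ := Quot.exists_rep ζ
  show PsiM0 ⟨pS x, hζ⟩ (Quot.mk (antipodalRel 3) (phiM x)) = Quot.mk (antipodalRel 7) x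
  show Quot.mk (antipodalRel 7) (insSM (⟨pS x, hζ⟩, phiM x)) = Quot.mk (antipodalRel 7) x
  rw [insSM_phiM x hζ]

set_option maxHeartbeats 1000000 in
lemma PhiM_PsiM : Function.RightInverse PsiM PhiM := by
  rintro ⟨bb, m⟩
  induction m using Quot.ind with
  | _ u =>
    refine Prod.ext (Subtype.ext ?_) ?_
    · show pS (insSM (bb, u)) = (bb : Sph 4)
      exact pS_insSM _
    · show Quot.mk (antipodalRel 3) (phiM (insSM (bb, u))) = Quot.mk (antipodalRel 3) u
      rw [phiM_insSM]

lemma phiM_eq_nrmSph (x : Sph 7) (h : (e8 (x : E 8)).2 ≠ 0) :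
    phiM x = nrmSph (e8 (x : E 8)).2 h :=
  Subtype.ext (by
    show linearIsometryEquivTuple (unitQ _) = _
    rw [unitQ_of_ne _ h]
    rfl)

lemma continuous_PhiM : Continuous PhiM := by
  have hquot : Topology.IsQuotientMap (PM.restrictPreimage (Quot.mk (antipodalRel 7))) :=
    (isOpenQuotientMap_sphereQuot 7).isQuotientMap.restrictPreimage_isOpen isOpen_PM
  rw [hquot.continuous_iff]
  have hB : ∀ v : ↥(Quot.mk (antipodalRel 7) ⁻¹' PM), (e8 ((v : Sph 7) : E 8)).2 ≠ 0 :=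
    fun v => (memUminus_iff _).1 v.2
  have hBc : Continuous fun v : ↥(Quot.mk (antipodalRel 7) ⁻¹' PM) =>
      (e8 ((v : Sph 7) : E 8)).2 :=
    (continuous_e8.comp (continuous_subtype_val.comp continuous_subtype_val)).snd
  have hphi : Continuous fun v : ↥(Quot.mk (antipodalRel 7) ⁻¹' PM) =>
      phiM (v : Sph 7) := by
    refine Continuous.congr (f := fun v : ↥(Quot.mk (antipodalRel 7) ⁻¹' PM) =>
      nrmSph (e8 ((v : Sph 7) : E 8)).2 (hB v)) ?_ ?_
    · refine Continuous.subtype_mk ?_ _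
      exact linearIsometryEquivTuple.continuous.comp
        (((hBc.norm).inv₀ fun v => norm_ne_zero_iff.2 (hB v)).smul hBc)
    · exact fun v => (phiM_eq_nrmSph _ (hB v)).symm
  show Continuous fun v : ↥(Quot.mk (antipodalRel 7) ⁻¹' PM) =>
    ((⟨pS (v : Sph 7), v.2⟩ : ↥Uminus), Quot.mk (antipodalRel 3) (phiM (v : Sph 7)))
  refine Continuous.prodMk ?_ ?_
  · exact ((continuous_pS.comp continuous_subtype_val).subtype_mk _)
  · exact continuous_quot_mk.comp hphi

lemma continuous_PsiM : Continuous PsiM := by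
  refine Continuous.subtype_mk ?_ _
  have hq := (IsOpenQuotientMap.id (X := ↥Uminus)).prodMap (isOpenQuotientMap_sphereQuot 3)
  rw [← hq.continuous_comp_iff]
  exact continuous_quot_mk.comp continuous_insSM

def chartMinus : ↥PM ≃ₜ ↥Uminus × RealProjSpace 3 where
  toFun := PhiM
  invFun := PsiM
  left_inv := PsiM_PhiM
  right_inv := PhiM_PsiM
  continuous_toFun := continuous_PhiM
  continuous_invFun := continuous_PsiM

/-! ### The main theorem -/

def oneSph3 : Sph 3 :=
  ⟨linearIsometryEquivTuple 1, by rw [mem_sph_iff, linearIsometryEquivTuple.norm_map, norm_one]⟩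

lemma pH_surjective : Function.Surjective pH := by
  intro b
  by_cases hb : (e5 (b : E 5)).2 = 1
  · have hbm : b ∈ Uminus → False := fun h => h hb
    have hbp : b ∈ Uplus := by
      intro h
      rw [hb] at h
      norm_num at h
    exact ⟨Quot.mk (antipodalRel 7) (insS (⟨b, hbp⟩, oneSph3)), pS_insS _⟩
  · exact ⟨Quot.mk (antipodalRel 7) (insSM (⟨b, hb⟩, oneSph3)), pS_insSM _⟩

/-- There is a fiber bundle `ℝP³ → ℝP⁷ → S⁴`: a continuous surjection
`p : ℝP⁷ → S⁴` which is locally trivial with fiber `ℝP³`. -/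
theorem exists_fiberBundle_rp7_over_s4_with_fiber_rp3 :
    ∃ p : RealProjSpace 7 → Metric.sphere (0 : EuclideanSpace ℝ (Fin 5)) 1,
      Continuous p ∧ Function.Surjective p ∧
      ∀ b : Metric.sphere (0 : EuclideanSpace ℝ (Fin 5)) 1,
        ∃ U : Set (Metric.sphere (0 : EuclideanSpace ℝ (Fin 5)) 1),
          IsOpen U ∧ b ∈ U ∧
          ∃ e : ↥(p ⁻¹' U) ≃ₜ ↥U × RealProjSpace 3,
            ∀ x : ↥(p ⁻¹' U), ((e x).1 : Metric.sphere (0 : EuclideanSpace ℝ (Fin 5)) 1) =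
              p (x : RealProjSpace 7) := by
  refine ⟨pH, continuous_pH, pH_surjective, ?_⟩
  intro b
  by_cases hb : (e5 (b : E 5)).2 = -1
  · have hbm : b ∈ Uminus := by
      intro h
      rw [hb] at h
      norm_num at h
    exact ⟨Uminus, isOpen_Uminus, hbm, chartMinus, fun x => rfl⟩
  · exact ⟨Uplus, isOpen_Uplus, hb, chartPlus, fun x => rfl⟩

end
end
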